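/- arXiv:0904.0945 — 2 statements merged into one kernel-verified Lean document; each statement's English description precedes it below -/
import Mathlib

section
/- For all f, g, φ ∈ A = F[x,y,z], the Schouten bracket of any two multiples of the same exact bracket vanishes: [f·{·,·}_φ, g·{·,·}_φ]_S = 0 as a trilinear map A × A × A → A. -/
open MvPolynomial

/-- The exact Poisson bracket `{P,Q}_ψ = det Jac(ψ,P,Q)` on `F[x,y,z]`. -/
noncomputable def pbr {F : Type*} [Field F] (ψ P Q : MvPolynomial (Fin 3) F) :
    MvPolynomial (Fin 3) F :=
  pderiv 0 ψ * (pderiv 1 P * pderiv 2 Q - pderiv 2 P * pderiv 1 Q)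
  + pderiv 1 ψ * (pderiv 2 P * pderiv 0 Q - pderiv 0 P * pderiv 2 Q)
  + pderiv 2 ψ * (pderiv 0 P * pderiv 1 Q - pderiv 1 P * pderiv 0 Q)


/-- The Schouten bracket of two (biderivation) brackets, as a trilinear map. -/
noncomputable def schouten {F : Type*} [Field F]
    (P Q : MvPolynomial (Fin 3) F → MvPolynomial (Fin 3) F → MvPolynomial (Fin 3) F)
    (a b c : MvPolynomial (Fin 3) F) : MvPolynomial (Fin 3) F :=
  P (Q a b) c - P (Q a c) b + P (Q b c) a + Q (P a b) c - Q (P a c) b + Q (P b c) a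

/-! Both brackets are multiples of the Poisson bracket `π = {·,·}_φ`, so the Leibniz rule
splits `[fπ, gπ]_S` into `2fg` times the Jacobiator of `π`, which vanishes, plus `f` and `g` times
the expression `π(a,b)π(h,c) - π(a,c)π(h,b) + π(b,c)π(h,a)`. The latter vanishes because `π`
has rank at most two. -/

theorem MvPolynomial.pderiv_pderiv_comm {R σ : Type*} [CommRing R] (i j : σ)
    (p : MvPolynomial σ R) : pderiv i (pderiv j p) = pderiv j (pderiv i p) := by
  have hcomm : ⁅pderiv (R := R) i, pderiv (R := R) j⁆ = 0 := by
    refine derivation_ext fun k => ?_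
    classical
    rw [Derivation.commutator_apply]
    simp [pderiv_X, Pi.single_apply, apply_ite]
  have h := congr($hcomm p)
  rw [Derivation.commutator_apply] at h
  exact sub_eq_zero.mp h

section
variable {F : Type*} [Field F] (φ : MvPolynomial (Fin 3) F)

theorem pbr_mul_left (p q c : MvPolynomial (Fin 3) F) :
    pbr φ (p * q) c = p * pbr φ q c + q * pbr φ p c := by
  simp only [pbr, Derivation.leibniz, smul_eq_mul]
  ring

theorem pbr_jacobi (a b c : MvPolynomial (Fin 3) F) :
    pbr φ (pbr φ a b) c - pbr φ (pbr φ a c) b + pbr φ (pbr φ b c) a = 0 := by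
  simp only [pbr, map_add, map_sub, Derivation.leibniz, smul_eq_mul,
    pderiv_pderiv_comm (1 : Fin 3) 0, pderiv_pderiv_comm (2 : Fin 3) 0,
    pderiv_pderiv_comm (2 : Fin 3) 1]
  ring

-- `det(∇φ,·,·)` is an area form `ω` on `F³/∇φ`, and `ω(u,v)w - ω(u,w)v + ω(v,w)u = 0` in dimension 2.
theorem pbr_mul_pbr_sub_add (a b c h : MvPolynomial (Fin 3) F) :
    pbr φ a b * pbr φ h c - pbr φ a c * pbr φ h b + pbr φ b c * pbr φ h a = 0 := by
  simp only [pbr]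
  ring

end

theorem statement5_general {F : Type*} [Field F] (f g φ : MvPolynomial (Fin 3) F) :
    ∀ F₁ F₂ F₃ : MvPolynomial (Fin 3) F,
      schouten (fun P Q => f * pbr φ P Q) (fun P Q => g * pbr φ P Q) F₁ F₂ F₃ = 0 := by
  intro a b c
  simp only [schouten, pbr_mul_left]
  linear_combination (2 * f * g) * pbr_jacobi φ a b c + f * pbr_mul_pbr_sub_add φ a b c g
    + g * pbr_mul_pbr_sub_add φ a b c f

/-- the Schouten bracket of any two multiples of the same exact bracket
vanishes. -/
theorem statement5 {F : Type*} [Field F] [CharZero F] (f g φ : MvPolynomial (Fin 3) F) :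
    ∀ F₁ F₂ F₃ : MvPolynomial (Fin 3) F,
      schouten (fun P Q => f * pbr φ P Q) (fun P Q => g * pbr φ P Q) F₁ F₂ F₃ = 0 :=
  statement5_general f g φ
end

section
/- For all f, φ, v ∈ A = F[x,y,z], one has the identity of Schouten brackets [f·{·,·}_φ, {·,·}_v]_S = −[{·,·}_φ, f·{·,·}_v]_S as trilinear maps A × A × A → A. (In particular, [f·{·,·}_φ, {·,·}_v]_S is, up to sign, the Poisson coboundary with respect to {·,·}_φ of the bivector f·{·,·}_v.) -/
open MvPolynomial

/-- Partial derivatives on `MvPolynomial` commute. -/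
lemma pderiv_comm' {F : Type*} [Field F] (i j : Fin 3) (p : MvPolynomial (Fin 3) F) :
    pderiv i (pderiv j p) = pderiv j (pderiv i p) := by
  induction p using MvPolynomial.induction_on with
  | C a => simp
  | add p q hp hq => simp [hp, hq]
  | mul_X p n hp =>
    simp [pderiv_mul, pderiv_X, Pi.single_apply, hp, apply_ite (pderiv i), apply_ite (pderiv j)]
    ring

/-- [f·{·,·}_φ, {·,·}_v]_S = −[{·,·}_φ, f·{·,·}_v]_S. -/
theorem statement6 {F : Type*} [Field F] [CharZero F] (f φ v : MvPolynomial (Fin 3) F) :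
    ∀ F₁ F₂ F₃ : MvPolynomial (Fin 3) F,
      schouten (fun P Q => f * pbr φ P Q) (fun P Q => pbr v P Q) F₁ F₂ F₃
        = - schouten (fun P Q => pbr φ P Q) (fun P Q => f * pbr v P Q) F₁ F₂ F₃ := by
  intro a b c
  simp only [schouten, pbr, pderiv_mul, map_add, map_sub,
    pderiv_comm' 1 0, pderiv_comm' 2 0, pderiv_comm' 2 1]
  ring
end
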